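/- Let n > 0 and let φ, ψ : ℝ → ℝ be differentiable with φ'(t) ≤ φ(t)²/n and ψ'(t) = ψ(t)²/n for all t. Define G(t) = exp(-(1/n)∫_{t₀}^t (φ(s)+ψ(s)) ds). Then the function t ↦ G(t)(φ(t) − ψ(t)) is non-increasing; consequently, if φ(t₀) = ψ(t₀), then φ(t) ≤ ψ(t) for all t ≥ t₀ and φ(t) ≥ ψ(t) for all t ≤ t₀. -/
import Mathlib


/-- Riccati comparison: with `G t = exp (-(1/n) ∫_{t₀}^t (φ + ψ))`, the function
`t ↦ G t * (φ t - ψ t)` is non-increasing for a subsolution `φ` and a solution `ψ`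
of `y' = y²/n`; consequently `φ(t₀) = ψ(t₀)` implies `φ ≤ ψ` after `t₀` and
`φ ≥ ψ` before `t₀`. -/
theorem stmt_1 (n : ℝ) (hn : 0 < n) (t₀ : ℝ) (φ ψ : ℝ → ℝ)
    (hφ : Differentiable ℝ φ) (hψ : Differentiable ℝ ψ)
    (hφ' : ∀ t : ℝ, deriv φ t ≤ φ t ^ 2 / n)
    (hψ' : ∀ t : ℝ, deriv ψ t = ψ t ^ 2 / n) :
    (Antitone fun t : ℝ =>
      Real.exp (-(1 / n) * ∫ s in t₀..t, (φ s + ψ s)) * (φ t - ψ t)) ∧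
    (φ t₀ = ψ t₀ →
      (∀ t : ℝ, t₀ ≤ t → φ t ≤ ψ t) ∧ (∀ t : ℝ, t ≤ t₀ → ψ t ≤ φ t)) := by
  set F : ℝ → ℝ := fun t =>
    Real.exp (-(1 / n) * ∫ s in t₀..t, (φ s + ψ s)) * (φ t - ψ t) with hF
  have hcont : Continuous fun s => φ s + ψ s :=
    (hφ.continuous).add (hψ.continuous)
  have hI : ∀ t : ℝ, HasDerivAt (fun u => ∫ s in t₀..u, (φ s + ψ s)) (φ t + ψ t) t :=
    fun t => (hcont.integral_hasStrictDerivAt t₀ t).hasDerivAt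
  have hE : ∀ t : ℝ, HasDerivAt
      (fun u => Real.exp (-(1 / n) * ∫ s in t₀..u, (φ s + ψ s)))
      (Real.exp (-(1 / n) * ∫ s in t₀..t, (φ s + ψ s)) * (-(1 / n) * (φ t + ψ t))) t := by
    intro t
    exact (((hI t).const_mul (-(1 / n))).exp)
  have hD : ∀ t : ℝ, HasDerivAt F
      (Real.exp (-(1 / n) * ∫ s in t₀..t, (φ s + ψ s)) * (-(1 / n) * (φ t + ψ t)) * (φ t - ψ t)
        + Real.exp (-(1 / n) * ∫ s in t₀..t, (φ s + ψ s)) * (deriv φ t - deriv ψ t)) t := by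
    intro t
    exact (hE t).mul ((hφ t).hasDerivAt.sub (hψ t).hasDerivAt)
  have hFdiff : Differentiable ℝ F := fun t => ((hD t).differentiableAt)
  have hderiv_nonpos : ∀ t : ℝ, deriv F t ≤ 0 := by
    intro t
    rw [(hD t).deriv]
    set E := Real.exp (-(1 / n) * ∫ s in t₀..t, (φ s + ψ s)) with hEdef
    have hEpos : 0 < E := Real.exp_pos _
    have key : E * (-(1 / n) * (φ t + ψ t)) * (φ t - ψ t)
        + E * (deriv φ t - deriv ψ t)
        ≤ E * (-(1 / n) * (φ t + ψ t)) * (φ t - ψ t)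
        + E * (φ t ^ 2 / n - ψ t ^ 2 / n) := by
      have : deriv φ t - deriv ψ t ≤ φ t ^ 2 / n - ψ t ^ 2 / n := by
        have := hφ' t; have := hψ' t; linarith [hφ' t, hψ' t]
      nlinarith [hEpos]
    have : E * (-(1 / n) * (φ t + ψ t)) * (φ t - ψ t)
        + E * (φ t ^ 2 / n - ψ t ^ 2 / n) = 0 := by
      field_simp
      ring
    linarith
  have hAnti : Antitone F := by
    have : ∀ t : ℝ, deriv F t ≤ 0 := hderiv_nonpos
    exact antitone_of_deriv_nonpos hFdiff this
  refine ⟨hAnti, fun h0 => ?_⟩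
  have hF0 : F t₀ = 0 := by
    simp [hF, h0]
  constructor
  · intro t ht
    have := hAnti ht
    rw [hF0] at this
    simp only [hF] at this
    have hEpos : 0 < Real.exp (-(1 / n) * ∫ s in t₀..t, (φ s + ψ s)) := Real.exp_pos _
    nlinarith [this]
  · intro t ht
    have := hAnti ht
    rw [hF0] at this
    simp only [hF] at this
    have hEpos : 0 < Real.exp (-(1 / n) * ∫ s in t₀..t, (φ s + ψ s)) := Real.exp_pos _
    nlinarith [this]
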